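/- Every univariate real polynomial of even degree 2n that is nonnegative on [α, β] (with α < β) can be written as s(x) + (x - α)(β - x) t(x) where s is a sum of squares of polynomials of degree at most n and t is a sum of squares of polynomials of degree at most n - 1. -/

import Mathlib

/-- A univariate real polynomial is a sum of squares of polynomials of degree at most `d`. -/
def IsSumOfSquaresOfDeg (d : ℕ) (p : Polynomial ℝ) : Prop :=
  ∃ (m : ℕ) (h : Fin m → Polynomial ℝ),
    (∀ i, (h i).natDegree ≤ d) ∧ p = ∑ i, (h i) ^ 2

/-!
A polynomial nonnegative on `[α, β]` lies in the preordering generated by `X - α` and `β - X`,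
truncated at its own degree. Peel off one factor at a time: `X - r` for a root `r ≤ α`, `r - X`
for a root `r ≥ β`, `(X - r)²` for an interior root (a double root, as `p` has a local minimum
there), or a positive quadratic `(X - a)² + b²` when `p` has no real root. Each factor lies in
the truncated preordering of its own degree, the cofactor stays nonnegative on `[α, β]`, and
degrees add under products. In degree `2n`, reducing the exponents of `X - α` and `β - X`
mod 2 leaves four kinds of generators; the two odd ones are absorbed through
`(β - α) (X - α) = (X - α)² + (X - α) (β - X)` and its mirror image.
-/

open Polynomial Set
open scoped Pointwise

theorem Continuous.forall_Icc_nonneg_of_ne {g : ℝ → ℝ} (hg : Continuous g) {α β r : ℝ}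
    (hαβ : α < β) (h : ∀ x ∈ Icc α β, x ≠ r → 0 ≤ g x) : ∀ x ∈ Icc α β, 0 ≤ g x := by
  intro x hx
  obtain hxr | rfl := ne_or_eq x r
  · exact h x hx hxr
  have hclosed : IsClosed {y | 0 ≤ g y} := isClosed_le continuous_const hg
  obtain hxβ | rfl := hx.2.lt_or_eq
  · refine hclosed.closure_subset_iff.2
      (fun y (hy : y ∈ Ioo x β) => h y ⟨hx.1.trans hy.1.le, hy.2.le⟩ hy.1.ne') ?_
    rw [closure_Ioo hxβ.ne]
    exact left_mem_Icc.2 hxβ.le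
  · refine hclosed.closure_subset_iff.2
      (fun y (hy : y ∈ Ioo α x) => h y ⟨hy.1.le, hy.2.le⟩ hy.2.ne) ?_
    rw [closure_Ioo hαβ.ne]
    exact right_mem_Icc.2 hαβ.le

namespace Polynomial

theorem natDegree_C_sub_X {R : Type*} [Ring R] [Nontrivial R] (b : R) :
    (C b - X).natDegree = 1 := by
  rw [← neg_sub, natDegree_neg, natDegree_X_sub_C]

theorem eval_nonneg_of_mul_nonneg {α β r : ℝ} (hαβ : α < β) {f q : ℝ[X]}
    (hfq : ∀ x ∈ Icc α β, 0 ≤ (f * q).eval x) (hf : ∀ x ∈ Icc α β, x ≠ r → 0 < f.eval x) :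
    ∀ x ∈ Icc α β, 0 ≤ q.eval x :=
  q.continuous.forall_Icc_nonneg_of_ne hαβ fun x hx hxr =>
    nonneg_of_mul_nonneg_right (eval_mul (p := f) ▸ hfq x hx) (hf x hx hxr)

theorem sq_X_sub_C_dvd_of_isLocalMin {p : ℝ[X]} {r : ℝ}
    (hmin : IsLocalMin (fun x => p.eval x) r) (hr : p.IsRoot r) : (X - C r) ^ 2 ∣ p := by
  rcases eq_or_ne p 0 with rfl | hp
  · exact dvd_zero _
  have hderiv : (derivative p).IsRoot r := by simpa using hmin.deriv_eq_zero
  exact (pow_dvd_pow _ ((one_lt_rootMultiplicity_iff_isRoot hp).2 ⟨hr, hderiv⟩)).trans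
    (pow_rootMultiplicity_dvd p r)

theorem exists_sq_add_sq_dvd {p : ℝ[X]} (hp : 0 < p.natDegree) (hroot : ∀ x, ¬p.IsRoot x) :
    ∃ a b : ℝ, b ≠ 0 ∧ (X - C a) ^ 2 + C b ^ 2 ∣ p := by
  obtain ⟨z, hz⟩ := IsAlgClosed.exists_aeval_eq_zero ℂ p (natDegree_pos_iff_degree_pos.1 hp).ne'
  have him : z.im ≠ 0 := by
    intro h
    have hz' : z = algebraMap ℝ ℂ z.re := Complex.ext (by simp) (by simp [h])
    rw [hz', aeval_algebraMap_apply_eq_algebraMap_eval, map_eq_zero] at hz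
    exact hroot z.re hz
  refine ⟨z.re, z.im, him, ?_⟩
  convert p.quadratic_dvd_of_aeval_eq_zero_im_ne_zero hz him using 1
  rw [← Complex.normSq_eq_norm_sq, Complex.normSq_apply]
  simp only [C_add, C_mul, C_ofNat]
  ring

def sumSqOfDeg (d : ℕ) : AddSubmonoid ℝ[X] where
  carrier := {p | IsSumOfSquaresOfDeg d p}
  zero_mem' := ⟨0, fun i => i.elim0, fun i => i.elim0, by simp⟩
  add_mem' := by
    rintro _ _ ⟨m, h, hd, rfl⟩ ⟨m', h', hd', rfl⟩
    refine ⟨m + m', Fin.append h h', Fin.addCases (by simpa using hd) (by simpa using hd'), ?_⟩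
    simp [Fin.sum_univ_add]

theorem sq_mem_sumSqOfDeg {d : ℕ} {f : ℝ[X]} (hf : f.natDegree ≤ d) : f ^ 2 ∈ sumSqOfDeg d :=
  ⟨1, fun _ => f, fun _ => hf, by simp⟩

noncomputable def intervalPreordering (α β : ℝ) (d : ℕ) : AddSubmonoid ℝ[X] :=
  AddSubmonoid.closure
    {p | p.natDegree ≤ d ∧ ∃ (i j : ℕ) (h : ℝ[X]), p = (X - C α) ^ i * (C β - X) ^ j * h ^ 2}

namespace intervalPreordering

variable {α β : ℝ} {a b d : ℕ} {p q : ℝ[X]}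

theorem mono (hab : a ≤ b) : intervalPreordering α β a ≤ intervalPreordering α β b :=
  AddSubmonoid.closure_mono fun _ ⟨hp, hij⟩ => ⟨hp.trans hab, hij⟩

theorem mul_mem (hp : p ∈ intervalPreordering α β a) (hq : q ∈ intervalPreordering α β b) :
    p * q ∈ intervalPreordering α β (a + b) := by
  have hpq := AddSubmonoid.mul_mem_mul hp hq
  rw [intervalPreordering, intervalPreordering, AddSubmonoid.closure_mul_closure] at hpq
  refine AddSubmonoid.closure_mono ?_ hpq
  rintro _ ⟨_, ⟨hf, i, j, h, rfl⟩, _, ⟨hg, i', j', h', rfl⟩, rfl⟩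
  exact ⟨natDegree_mul_le.trans (add_le_add hf hg), i + i', j + j', h * h', by ring⟩

theorem sq_mem (h : ℝ[X]) : h ^ 2 ∈ intervalPreordering α β (h ^ 2).natDegree :=
  AddSubmonoid.subset_closure ⟨le_rfl, 0, 0, h, by simp⟩

theorem C_mem {c : ℝ} (hc : 0 ≤ c) : C c ∈ intervalPreordering α β d :=
  mono (Nat.zero_le d) <| by
    simpa [← C_pow, Real.sq_sqrt hc] using sq_mem (α := α) (β := β) (C √c)

theorem X_sub_C_mem {r : ℝ} (hr : r ≤ α) : X - C r ∈ intervalPreordering α β 1 := by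
  have hX : X - C α ∈ intervalPreordering α β 1 :=
    AddSubmonoid.subset_closure ⟨(natDegree_X_sub_C α).le, 1, 0, 1, by simp⟩
  simpa [C_sub] using add_mem hX (C_mem (sub_nonneg.2 hr))

theorem C_sub_X_mem {r : ℝ} (hr : β ≤ r) : C r - X ∈ intervalPreordering α β 1 := by
  have hX : C β - X ∈ intervalPreordering α β 1 :=
    AddSubmonoid.subset_closure ⟨(natDegree_C_sub_X β).le, 0, 1, 1, by simp⟩
  simpa [C_sub] using add_mem hX (C_mem (sub_nonneg.2 hr))

theorem weight_mul_sq_eq_mod_two (α β : ℝ) (i j : ℕ) (h : ℝ[X]) :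
    (X - C α) ^ i * (C β - X) ^ j * h ^ 2 =
      (X - C α) ^ (i % 2) * (C β - X) ^ (j % 2) *
        ((X - C α) ^ (i / 2) * (C β - X) ^ (j / 2) * h) ^ 2 := by
  conv_lhs => rw [← Nat.div_add_mod i 2, ← Nat.div_add_mod j 2]
  ring

theorem exists_factor_of_nonneg (hp : ∀ x ∈ Icc α β, 0 ≤ p.eval x) (hdeg : 0 < p.natDegree) :
    ∃ f q r, p = f * q ∧ 0 < f.natDegree ∧ f ∈ intervalPreordering α β f.natDegree ∧
      ∀ x ∈ Icc α β, x ≠ r → 0 < f.eval x := by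
  by_cases hroot : ∃ r, p.IsRoot r
  · obtain ⟨r, hr⟩ := hroot
    rcases le_or_gt r α with hrα | hαr
    · obtain ⟨q, hq⟩ := dvd_iff_isRoot.2 hr
      refine ⟨X - C r, q, r, hq, by simp, by simpa using X_sub_C_mem hrα, fun x hx hxr => ?_⟩
      simpa using lt_of_le_of_ne (hrα.trans hx.1) (Ne.symm hxr)
    rcases le_or_gt β r with hβr | hrβ
    · obtain ⟨q, hq⟩ := dvd_iff_isRoot.2 hr
      refine ⟨C r - X, -q, r, by rw [hq]; ring, by simp [natDegree_C_sub_X],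
        by simpa [natDegree_C_sub_X] using C_sub_X_mem hβr, fun x hx hxr => ?_⟩
      simpa using lt_of_le_of_ne (hx.2.trans hβr) hxr
    · have hmin : IsLocalMin (fun x => p.eval x) r := by
        filter_upwards [Ioo_mem_nhds hαr hrβ] with x hx
        simpa [hr.eq_zero] using hp x (Ioo_subset_Icc_self hx)
      obtain ⟨q, hq⟩ := sq_X_sub_C_dvd_of_isLocalMin hmin hr
      refine ⟨(X - C r) ^ 2, q, r, hq, by simp, sq_mem _, fun x _ hxr => ?_⟩
      simpa using sq_pos_of_ne_zero (sub_ne_zero.2 hxr)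
  · rw [not_exists] at hroot
    obtain ⟨a, b, hb, q, hq⟩ := exists_sq_add_sq_dvd hdeg hroot
    have hdeg2 : ((X - C a) ^ 2 + C b ^ 2).natDegree = 2 := by compute_degree!
    have hXa := sq_mem (α := α) (β := β) (X - C a)
    rw [natDegree_pow, natDegree_X_sub_C, mul_one] at hXa
    have hb2 : C b ^ 2 ∈ intervalPreordering α β 2 := by
      rw [← C_pow]
      exact C_mem (sq_nonneg b)
    have hmem := add_mem hXa hb2
    refine ⟨_, q, α, hq, by omega, by rwa [hdeg2], fun x _ _ => ?_⟩
    simp only [eval_add, eval_pow, eval_sub, eval_X, eval_C]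
    positivity

theorem mem_of_nonneg (hαβ : α < β) (hp : ∀ x ∈ Icc α β, 0 ≤ p.eval x) :
    p ∈ intervalPreordering α β p.natDegree := by
  induction hd : p.natDegree using Nat.strong_induction_on generalizing p with
  | _ d ih =>
  rcases Nat.eq_zero_or_pos d with rfl | hd0
  · have hc : 0 ≤ p.coeff 0 := by
      simpa [eval_eq_sum_range, hd] using hp α (left_mem_Icc.2 hαβ.le)
    rw [eq_C_of_natDegree_eq_zero hd]
    exact C_mem hc
  obtain ⟨f, q, r, rfl, hf, hfmem, hfpos⟩ := exists_factor_of_nonneg hp (hd ▸ hd0)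
  have hf0 : f ≠ 0 := by rintro rfl; simp at hf
  have hq0 : q ≠ 0 := by rintro rfl; simp at hd; omega
  rw [natDegree_mul hf0 hq0] at hd
  rw [← hd]
  exact mul_mem hfmem (ih q.natDegree (by omega) (eval_nonneg_of_mul_nonneg hαβ hp hfpos) rfl)

end intervalPreordering

noncomputable def lukacsForm (α β : ℝ) (n : ℕ) : AddSubmonoid ℝ[X] :=
  sumSqOfDeg n ⊔ (sumSqOfDeg (n - 1)).map (AddMonoidHom.mulLeft ((X - C α) * (C β - X)))

namespace lukacsForm

variable {α β : ℝ} {n : ℕ} {f : ℝ[X]}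

theorem mul_sq_mem (hαβ : α < β) {g : ℝ[X]} (hg : g = X - C α ∨ g = C β - X)
    (hf : f.natDegree < n) : g * f ^ 2 ∈ lukacsForm α β n := by
  set c := √(β - α)⁻¹
  have hc : C c ^ 2 * (C β - C α) = 1 := by
    rw [← C_pow, Real.sq_sqrt (inv_nonneg.2 (sub_pos.2 hαβ).le), ← C_sub, ← C_mul,
      inv_mul_cancel₀ (sub_pos.2 hαβ).ne', C_1]
  have hg1 : g.natDegree ≤ 1 := by
    rcases hg with rfl | rfl <;> simp [natDegree_C_sub_X]
  have hsplit : g * f ^ 2 = (C c * g * f) ^ 2 + (X - C α) * (C β - X) * (C c * f) ^ 2 := by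
    have hg2 : g ^ 2 + (X - C α) * (C β - X) = g * (C β - C α) := by
      rcases hg with rfl | rfl <;> ring
    linear_combination (-(g * f ^ 2)) * hc - (C c ^ 2 * f ^ 2) * hg2
  rw [hsplit]
  refine add_mem (AddSubmonoid.mem_sup_left (sq_mem_sumSqOfDeg ?_))
    (AddSubmonoid.mem_sup_right (AddSubmonoid.mem_map_of_mem _ (sq_mem_sumSqOfDeg ?_)))
  · exact natDegree_mul_le.trans (by grw [natDegree_C_mul_le, hg1]; omega)
  · exact (natDegree_C_mul_le _ _).trans (by omega)

theorem weight_mul_sq_mem (hαβ : α < β) {i j : ℕ} (hi : i < 2) (hj : j < 2)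
    (hd : ((X - C α) ^ i * (C β - X) ^ j * f ^ 2).natDegree ≤ 2 * n) :
    (X - C α) ^ i * (C β - X) ^ j * f ^ 2 ∈ lukacsForm α β n := by
  rcases eq_or_ne f 0 with rfl | hf
  · simp [zero_mem]
  have hf2 : f ^ 2 ≠ 0 := pow_ne_zero 2 hf
  have hα : X - C α ≠ 0 := X_sub_C_ne_zero α
  have hβ : C β - X ≠ 0 := by rw [← neg_sub]; exact neg_ne_zero.2 (X_sub_C_ne_zero β)
  interval_cases i <;> interval_cases j <;>
    simp only [pow_zero, pow_one, one_mul, mul_one] at hd ⊢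
  · rw [natDegree_pow] at hd
    exact AddSubmonoid.mem_sup_left (sq_mem_sumSqOfDeg (by omega))
  · rw [natDegree_mul hβ hf2, natDegree_pow, natDegree_C_sub_X] at hd
    exact mul_sq_mem hαβ (Or.inr rfl) (by omega)
  · rw [natDegree_mul hα hf2, natDegree_pow, natDegree_X_sub_C] at hd
    exact mul_sq_mem hαβ (Or.inl rfl) (by omega)
  · rw [natDegree_mul (mul_ne_zero hα hβ) hf2, natDegree_mul hα hβ, natDegree_pow,
      natDegree_X_sub_C, natDegree_C_sub_X] at hd
    exact AddSubmonoid.mem_sup_right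
      (AddSubmonoid.mem_map_of_mem _ (sq_mem_sumSqOfDeg (f := f) (by omega)))

end lukacsForm

theorem intervalPreordering_le_lukacsForm {α β : ℝ} (hαβ : α < β) (n : ℕ) :
    intervalPreordering α β (2 * n) ≤ lukacsForm α β n := by
  refine AddSubmonoid.closure_le.2 ?_
  rintro _ ⟨hd, i, j, h, rfl⟩
  rw [intervalPreordering.weight_mul_sq_eq_mod_two] at hd ⊢
  exact lukacsForm.weight_mul_sq_mem hαβ (Nat.mod_lt _ two_pos) (Nat.mod_lt _ two_pos) hd

end Polynomial

theorem markov_lukacs_even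
    (α β : ℝ) (hαβ : α < β) (n : ℕ) (p : Polynomial ℝ)
    (hdeg : p.natDegree = 2 * n)
    (hpos : ∀ x ∈ Set.Icc α β, 0 ≤ p.eval x) :
    ∃ s t : Polynomial ℝ, IsSumOfSquaresOfDeg n s ∧ IsSumOfSquaresOfDeg (n - 1) t ∧
      p = s + (Polynomial.X - Polynomial.C α) * (Polynomial.C β - Polynomial.X) * t := by
  have hp : p ∈ intervalPreordering α β (2 * n) :=
    hdeg ▸ intervalPreordering.mem_of_nonneg hαβ hpos
  obtain ⟨s, hs, _, ⟨t, ht, rfl⟩, rfl⟩ :=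
    AddSubmonoid.mem_sup.1 (intervalPreordering_le_lukacsForm hαβ n hp)
  exact ⟨s, t, hs, ht, rfl⟩
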